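/- arXiv:2010.08904 — 8 statements merged into one kernel-verified Lean document; each statement's English description precedes it below -/
import Mathlib

section
/- Let n ≥ 2, t ≥ 1 and N : ℕ. Let v : Fin N → (Fin t → Fin n) be an injective function (a list of N distinct vertices of K_n^t). Then the following are equivalent: (1) for all indices i and all k with 1 ≤ k < t and i + k < N, hammingDist (v i) (v (i+k)) ≥ t + 1 − k (equivalently, v i and v (i+k) agree in at most k − 1 coordinates); (2) for all indices i < j in Fin N, (j − i : ℕ) + hammingDist (v i) (v j) ≥ t + 1 (i.e., the labeling f(v i) = i + 1 satisfies the radio condition for all pairs of distinct listed vertices). -/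
/-- Corollary (rcmat) for K_n^t: a list of distinct vertices of K_n^t induces a consecutive
radio labeling iff consecutive-window hamming distance conditions hold. -/
theorem stmt_1 (n t : ℕ) (hn : 2 ≤ n) (ht : 1 ≤ t)
    (N : ℕ) (v : Fin N → Fin t → Fin n) (hv : Function.Injective v) :
    (∀ i k : ℕ, 1 ≤ k → k < t → (h : i + k < N) →
      hammingDist (v ⟨i, by omega⟩) (v ⟨i + k, h⟩) ≥ t + 1 - k) ↔
    (∀ i j : Fin N, i < j → (j : ℕ) - (i : ℕ) + hammingDist (v i) (v j) ≥ t + 1) := by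
  constructor
  · intro H i j hij
    have hij' : (i : ℕ) < (j : ℕ) := hij
    set k := (j : ℕ) - (i : ℕ) with hk
    have hk1 : 1 ≤ k := by omega
    by_cases hkt : k < t
    · have hlt : (i : ℕ) + k < N := by
        have := j.isLt; omega
      have := H i k hk1 hkt hlt
      have hji : (⟨(i : ℕ) + k, hlt⟩ : Fin N) = j := by
        ext; simp; omega
      have hii : (⟨(i : ℕ), by omega⟩ : Fin N) = i := by ext; simp
      rw [hji, hii] at this
      omega
    · have hne : v i ≠ v j := fun h => (Fin.ne_of_lt hij) (hv h)
      have : 0 < hammingDist (v i) (v j) := hammingDist_pos.mpr hne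
      omega
  · intro H i k hk1 hkt h
    have hlt : (⟨i, by omega⟩ : Fin N) < ⟨i + k, h⟩ := by
      simp [Fin.lt_def]; omega
    have := H ⟨i, by omega⟩ ⟨i + k, h⟩ hlt
    simp at this
    omega
end

section
/- Let t ≥ 1, n : Fin t → ℕ with 2 ≤ n j for all j, and N : ℕ. Suppose v : Fin N → (Π j : Fin t, Fin (n j)) is injective and satisfies: for all i and all k with 1 ≤ k < t and i + k < N, hammingDist (v i) (v (i+k)) ≥ t + 1 − k. For an index i and k with i + k < N, let α_k^i be the cardinality of the set of columns j : Fin t such that the entries (v (i+a)) j for 0 ≤ a ≤ k are pairwise distinct. Then for every i and every k with i + k + 1 < N, α_{k+1}^i ≥ α_k^i − k(k+1)/2. -/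
set_option maxHeartbeats 1000000 in
/-- Proposition (alphastep): α_{k+1}^i ≥ α_k^i − k(k+1)/2, where α_k^i is the number of
columns j in which the entries of rows i, …, i+k of the ordering are pairwise distinct. -/
theorem stmt_3 (t : ℕ) (ht : 1 ≤ t) (n : Fin t → ℕ) (hn : ∀ j, 2 ≤ n j)
    (N : ℕ) (v : Fin N → ∀ j : Fin t, Fin (n j)) (hv : Function.Injective v)
    (hrad : ∀ i k : ℕ, 1 ≤ k → k < t → (h : i + k < N) →
      hammingDist (v ⟨i, by omega⟩) (v ⟨i + k, h⟩) ≥ t + 1 - k)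
    (i k : ℕ) (h : i + k + 1 < N) :
    Nat.card {j : Fin t // ∀ a b : ℕ, (ha : a ≤ k + 1) → (hb : b ≤ k + 1) → a ≠ b →
        v ⟨i + a, by omega⟩ j ≠ v ⟨i + b, by omega⟩ j} ≥
    Nat.card {j : Fin t // ∀ a b : ℕ, (ha : a ≤ k) → (hb : b ≤ k) → a ≠ b →
        v ⟨i + a, by omega⟩ j ≠ v ⟨i + b, by omega⟩ j} - k * (k + 1) / 2 := by
  classical
  have hcard : ∀ (P : Fin t → Prop), Nat.card {j : Fin t // P j}
      = (Finset.univ.filter P).card := by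
    intro P
    rw [Nat.card_eq_fintype_card, Fintype.card_subtype]
  rw [hcard, hcard]
  set A : Finset (Fin t) := Finset.univ.filter (fun j => ∀ a b : ℕ,
      (ha : a ≤ k) → (hb : b ≤ k) → a ≠ b →
      v ⟨i + a, by omega⟩ j ≠ v ⟨i + b, by omega⟩ j) with hA
  set B : Finset (Fin t) := Finset.univ.filter (fun j => ∀ a b : ℕ,
      (ha : a ≤ k + 1) → (hb : b ≤ k + 1) → a ≠ b →
      v ⟨i + a, by omega⟩ j ≠ v ⟨i + b, by omega⟩ j) with hB
  set C : ℕ → Finset (Fin t) := fun a => Finset.univ.filter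
      (fun j => v ⟨min (i + a) (i + k), by omega⟩ j = v ⟨i + k + 1, by omega⟩ j) with hC
  -- each C a (a ≤ k) has at most k - a elements
  have hCcard : ∀ a : ℕ, a ≤ k → (C a).card ≤ k - a := by
    intro a ha
    have hfin : (⟨min (i + a) (i + k), by omega⟩ : Fin N) = ⟨i + a, by omega⟩ := by
      ext; simp; omega
    have hCa : C a = Finset.univ.filter
        (fun j => v ⟨i + a, by omega⟩ j = v ⟨i + k + 1, by omega⟩ j) := by
      simp only [hC, hfin]
    rw [hCa]
    set x := v (⟨i + a, by omega⟩ : Fin N) with hx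
    set y := v (⟨i + k + 1, by omega⟩ : Fin N) with hy
    have hdist : hammingDist x y ≥ t - (k - a) := by
      by_cases hkt : k + 1 - a < t
      · have := hrad (i + a) (k + 1 - a) (by omega) hkt (by omega)
        have heq1 : (⟨i + a + (k + 1 - a), by omega⟩ : Fin N) = ⟨i + k + 1, by omega⟩ := by
          ext; simp; omega
        rw [heq1] at this
        rw [hx, hy]
        omega
      · have hne : (⟨i + a, by omega⟩ : Fin N) ≠ ⟨i + k + 1, by omega⟩ := by
          simp only [ne_eq, Fin.mk.injEq]; omega
        have hxy : x ≠ y := fun hc => hne (hv hc)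
        have : hammingDist x y ≠ 0 := hammingDist_ne_zero.mpr hxy
        omega
    have hsplit := Finset.card_filter_add_card_filter_not
      (s := (Finset.univ : Finset (Fin t))) (p := fun j => x j ≠ y j)
    have hdd : hammingDist x y = (Finset.univ.filter fun j => x j ≠ y j).card := rfl
    have heq : (Finset.univ.filter fun j => x j = y j).card
        = (Finset.univ.filter fun j => ¬ x j ≠ y j).card := by
      simp only [not_not]
    have hcardt : (Finset.univ : Finset (Fin t)).card = t := by simp
    rw [heq]
    omega
  -- A minus the union of the C a is contained in B
  have hsub : A ⊆ B ∪ (Finset.range (k + 1)).biUnion C := by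
    intro j hj
    rw [Finset.mem_union]
    by_cases hjc : j ∈ (Finset.range (k + 1)).biUnion C
    · exact Or.inr hjc
    · left
      simp only [hB, Finset.mem_filter, Finset.mem_univ, true_and]
      simp only [hA, Finset.mem_filter, Finset.mem_univ, true_and] at hj
      simp only [Finset.mem_biUnion, Finset.mem_range, hC, Finset.mem_filter,
        Finset.mem_univ, true_and, not_exists] at hjc
      intro a b ha hb hab
      have hmk : ∀ c : ℕ, (hc : c ≤ k) → ((⟨min (i + c) (i + k), by omega⟩ : Fin N) = ⟨i + c, by omega⟩) := by
        intro c hc; ext; simp; omega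
      rcases Nat.lt_or_ge a (k + 1) with ha' | ha'
      · rcases Nat.lt_or_ge b (k + 1) with hb' | hb'
        · exact hj a b (by omega) (by omega) hab
        · have hb1 : b = k + 1 := by omega
          intro hc
          apply hjc a
          refine ⟨ha', ?_⟩
          rw [hmk a (by omega)]
          subst hb1
          exact hc
      · have ha1 : a = k + 1 := by omega
        have hb' : b < k + 1 := by omega
        intro hc
        apply hjc b
        refine ⟨hb', ?_⟩
        rw [hmk b (by omega)]
        subst ha1
        exact hc.symm
  -- sum of the bounds
  have hsum : ∑ a ∈ Finset.range (k + 1), (k - a) = k * (k + 1) / 2 := by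
    have h1 := Finset.sum_range_reflect (fun a => a) (k + 1)
    calc ∑ a ∈ Finset.range (k + 1), (k - a)
        = ∑ a ∈ Finset.range (k + 1), (k + 1 - 1 - a) := by simp
      _ = ∑ a ∈ Finset.range (k + 1), a := h1
      _ = k * (k + 1) / 2 := by rw [Finset.sum_range_id, Nat.add_sub_cancel, Nat.mul_comm]
  have hAle : A.card ≤ B.card + k * (k + 1) / 2 := by
    calc A.card ≤ (B ∪ (Finset.range (k + 1)).biUnion C).card := Finset.card_le_card hsub
      _ ≤ B.card + ((Finset.range (k + 1)).biUnion C).card := Finset.card_union_le _ _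
      _ ≤ B.card + ∑ a ∈ Finset.range (k + 1), (C a).card := by
          gcongr; exact Finset.card_biUnion_le
      _ ≤ B.card + ∑ a ∈ Finset.range (k + 1), (k - a) := by
          gcongr with a ha
          exact hCcard a (by simpa using Nat.lt_succ_iff.mp (Finset.mem_range.mp ha))
      _ = B.card + k * (k + 1) / 2 := by rw [hsum]
  omega
end

section
/- Let t ≥ 1, n : Fin t → ℕ with 2 ≤ n j for all j, and N = ∏ j, n j. Suppose there exists k₀ : Fin t such that 6 · |{ j : Fin t | n j ≤ n k₀ }| ≥ 6 + n k₀ · ((n k₀)² − 1). Then there is no bijection v : Fin N → (Π j : Fin t, Fin (n j)) satisfying: for all i and all k with 1 ≤ k < t and i + k < N, hammingDist (v i) (v (i+k)) ≥ t + 1 − k. That is, the Hamming graph K_{n 0} □ ⋯ □ K_{n (t-1)} is not radio graceful. -/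
open Finset

private lemma aux_inner (b : ℕ) :
    ∑ a ∈ Finset.range b, (b - a - 1) = ∑ a ∈ Finset.range b, a := by
  calc ∑ a ∈ Finset.range b, (b - a - 1)
      = ∑ a ∈ Finset.range b, (b - 1 - a) := by
        apply Finset.sum_congr rfl; intro a _; omega
    _ = ∑ a ∈ Finset.range b, a := Finset.sum_range_reflect (fun a => a) b

private lemma aux_cube (m : ℕ) :
    6 * (∑ b ∈ Finset.range (m+1), ∑ a ∈ Finset.range b, (b - a - 1)) + m = m ^ 3 := by
  induction m with
  | zero => simp
  | succ m IH =>
    rw [Finset.sum_range_succ, aux_inner (m+1)]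
    have h2 : (∑ i ∈ Finset.range (m+1), i) * 2 = (m+1) * m := Finset.sum_range_id_mul_two (m+1)
    have e3 : (m+1) ^ 3 = m ^ 3 + 3 * ((m+1) * m) + 1 := by ring
    rw [e3, ← IH, ← h2]
    ring

/-- Theorem (upperboundgeneral): if 6·t̄_{k₀} ≥ 6 + n k₀ (n k₀² − 1) for some factor k₀,
then the Hamming graph K_{n 0} □ ⋯ □ K_{n (t-1)} is not radio graceful. -/
theorem stmt_5 (t : ℕ) (ht : 1 ≤ t) (n : Fin t → ℕ) (hn : ∀ j, 2 ≤ n j)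
    (N : ℕ) (hN : N = ∏ j, n j) (k₀ : Fin t)
    (hk : 6 * Nat.card {j : Fin t // n j ≤ n k₀} ≥ 6 + n k₀ * ((n k₀) ^ 2 - 1)) :
    ¬ ∃ v : Fin N → ∀ j : Fin t, Fin (n j), Function.Bijective v ∧
      ∀ i k : ℕ, 1 ≤ k → k < t → (h : i + k < N) →
        hammingDist (v ⟨i, by omega⟩) (v ⟨i + k, h⟩) ≥ t + 1 - k := by
  classical
  rintro ⟨v, hbij, hv⟩
  set m := n k₀ with hmdef
  have hm2 : 2 ≤ m := hn k₀
  -- rewrite Nat.card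
  have htbar : Nat.card {j : Fin t // n j ≤ n k₀}
      = (Finset.univ.filter fun j => n j ≤ m).card := by
    rw [Nat.card_eq_fintype_card, Fintype.card_subtype]
  rw [htbar] at hk
  set tb := (Finset.univ.filter fun j : Fin t => n j ≤ m).card with htb
  -- basic arithmetic facts
  have h1m : 1 ≤ m ^ 2 := Nat.one_le_pow _ _ (by omega)
  have e1 : m * (m ^ 2 - 1) + m = m ^ 3 := by
    calc m * (m ^ 2 - 1) + m = m * ((m ^ 2 - 1) + 1) := by ring
      _ = m * m ^ 2 := by rw [Nat.sub_add_cancel h1m]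
      _ = m ^ 3 := by ring
  have hm3 : 4 * m ≤ m ^ 3 := by nlinarith
  have htb2 : 2 ≤ tb := by linarith
  have htbt : tb ≤ t := by
    calc tb ≤ (Finset.univ : Finset (Fin t)).card := Finset.card_filter_le _ _
      _ = t := by simp
  have ht2 : 2 ≤ t := le_trans htb2 htbt
  -- m < N
  have hNsplit : N = m * ∏ j ∈ Finset.univ.erase k₀, n j := by
    rw [hN, ← Finset.mul_prod_erase _ _ (Finset.mem_univ k₀)]
  have herase : (Finset.univ.erase k₀).Nonempty := by
    rw [← Finset.card_pos, Finset.card_erase_of_mem (Finset.mem_univ k₀)]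
    simp only [Finset.card_univ, Fintype.card_fin]
    omega
  obtain ⟨j₁, hj₁⟩ := herase
  have h2P : 2 ≤ ∏ j ∈ Finset.univ.erase k₀, n j :=
    le_trans (hn j₁) (Finset.single_le_prod' (fun i _ => by have := hn i; omega) hj₁)
  have hmN : m < N := by
    calc m < m * 2 := by omega
      _ ≤ m * ∏ j ∈ Finset.univ.erase k₀, n j := Nat.mul_le_mul_left _ h2P
      _ = N := hNsplit.symm
  have hN0 : 0 < N := by omega
  -- the window function
  set V : ℕ → ∀ j : Fin t, Fin (n j) :=
    fun a => if h : a < N then v ⟨a, h⟩ else v ⟨0, hN0⟩ with hVdef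
  have hV : ∀ a (h : a < N), V a = v ⟨a, h⟩ := fun a h => dif_pos h
  -- card + hammingDist = t
  have hcard : ∀ x y : (∀ j : Fin t, Fin (n j)),
      ((Finset.univ : Finset (Fin t)).filter fun j => x j = y j).card + hammingDist x y = t := by
    intro x y
    have := Finset.card_filter_add_card_filter_not
      (s := (Finset.univ : Finset (Fin t))) (p := fun j => x j = y j)
    simpa [hammingDist, Finset.card_univ, ne_eq] using this
  -- per-pair bound
  have hpair : ∀ a b : ℕ, a < b → b ≤ m →
      ((Finset.univ : Finset (Fin t)).filter fun j => V a j = V b j).card ≤ b - a - 1 := by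
    intro a b hab hbm
    have haN : a < N := by omega
    have hbN : b < N := by omega
    have hc := hcard (V a) (V b)
    by_cases hkt : b - a < t
    · have h' : a + (b - a) < N := by omega
      have hd : t + 1 - (b - a) ≤ hammingDist (V a) (V b) := by
        rw [hV a haN, hV b hbN]
        have heqb : (⟨b, hbN⟩ : Fin N) = ⟨a + (b - a), h'⟩ := Fin.ext (show b = a + (b - a) by omega)
        rw [heqb]
        exact hv a (b - a) (by omega) hkt h'
      omega
    · have hne : V a ≠ V b := by
        rw [hV a haN, hV b hbN]
        intro hEq
        have h2 := hbij.injective hEq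
        have : a = b := by simpa using congrArg Fin.val h2
        omega
      have hd : hammingDist (V a) (V b) ≠ 0 := by
        simpa [hammingDist_eq_zero] using hne
      omega
  -- the double count
  set S := ∑ b ∈ Finset.range (m+1), ∑ a ∈ Finset.range b,
      ((Finset.univ : Finset (Fin t)).filter fun j => V a j = V b j).card with hSdef
  set B := ∑ b ∈ Finset.range (m+1), ∑ a ∈ Finset.range b, (b - a - 1) with hBdef
  have hSB : S ≤ B := by
    apply Finset.sum_le_sum
    intro b hb
    apply Finset.sum_le_sum
    intro a ha
    exact hpair a b (Finset.mem_range.1 ha)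
      (by have := Finset.mem_range.1 hb; omega)
  -- lower bound : tb ≤ S
  have hswap : S = ∑ j : Fin t, ∑ b ∈ Finset.range (m+1), ∑ a ∈ Finset.range b,
      (if V a j = V b j then (1:ℕ) else 0) := by
    rw [hSdef]
    simp_rw [Finset.card_filter]
    calc ∑ b ∈ Finset.range (m+1), ∑ a ∈ Finset.range b, ∑ j : Fin t,
          (if V a j = V b j then (1:ℕ) else 0)
        = ∑ b ∈ Finset.range (m+1), ∑ j : Fin t, ∑ a ∈ Finset.range b,
          (if V a j = V b j then (1:ℕ) else 0) :=
          Finset.sum_congr rfl (fun b _ => Finset.sum_comm)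
      _ = ∑ j : Fin t, ∑ b ∈ Finset.range (m+1), ∑ a ∈ Finset.range b,
          (if V a j = V b j then (1:ℕ) else 0) := Finset.sum_comm
  have hperj : ∀ j : Fin t, (if n j ≤ m then (1:ℕ) else 0) ≤
      ∑ b ∈ Finset.range (m+1), ∑ a ∈ Finset.range b,
        (if V a j = V b j then (1:ℕ) else 0) := by
    intro j
    by_cases hj : n j ≤ m
    · rw [if_pos hj]
      have hlt : Fintype.card (Fin (n j)) < Fintype.card (Fin (m+1)) := by
        simpa using Nat.lt_succ_of_le hj
      obtain ⟨x, y, hne, heq⟩ :=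
        Fintype.exists_ne_map_eq_of_card_lt (fun a : Fin (m+1) => V (a : ℕ) j) hlt
      have key : ∀ p q : Fin (m+1), (p : ℕ) < (q : ℕ) → V (p : ℕ) j = V (q : ℕ) j →
          1 ≤ ∑ b ∈ Finset.range (m+1), ∑ a ∈ Finset.range b,
            (if V a j = V b j then (1:ℕ) else 0) := by
        intro p q hpq hpv
        have h1 : 1 ≤ ∑ a ∈ Finset.range (q : ℕ), (if V a j = V (q : ℕ) j then (1:ℕ) else 0) := by
          have := Finset.single_le_sum
            (f := fun a => if V a j = V (q : ℕ) j then (1:ℕ) else 0)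
            (fun i _ => Nat.zero_le _) (Finset.mem_range.2 hpq)
          simpa [hpv] using this
        calc (1:ℕ) ≤ ∑ a ∈ Finset.range (q : ℕ),
              (if V a j = V (q : ℕ) j then (1:ℕ) else 0) := h1
          _ ≤ ∑ b ∈ Finset.range (m+1), ∑ a ∈ Finset.range b,
              (if V a j = V b j then (1:ℕ) else 0) :=
            Finset.single_le_sum
              (f := fun b => ∑ a ∈ Finset.range b, (if V a j = V b j then (1:ℕ) else 0))
              (fun i _ => Nat.zero_le _) (Finset.mem_range.2 q.isLt)
      rcases Ne.lt_or_gt hne with h | h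
      · exact key x y h heq
      · exact key y x h heq.symm
    · simp [hj]
  have hlow : tb ≤ S := by
    calc tb = ∑ j : Fin t, (if n j ≤ m then (1:ℕ) else 0) := Finset.card_filter _ _
      _ ≤ ∑ j : Fin t, ∑ b ∈ Finset.range (m+1), ∑ a ∈ Finset.range b,
          (if V a j = V b j then (1:ℕ) else 0) := Finset.sum_le_sum (fun j _ => hperj j)
      _ = S := hswap.symm
  -- final contradiction
  have hB6 : 6 * B + m = m ^ 3 := aux_cube m
  have hEq : 6 * B = m * (m ^ 2 - 1) := Nat.add_right_cancel (hB6.trans e1.symm)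
  linarith
end

section
/- Let n ≥ 2 and t ≥ 1 with 6 · t ≥ 6 + n · (n² − 1), and let N = n^t. Then there is no bijection v : Fin N → (Fin t → Fin n) satisfying: for all i and all k with 1 ≤ k < t and i + k < N, hammingDist (v i) (v (i+k)) ≥ t + 1 − k. That is, K_n^t is not radio graceful when t ≥ 1 + n(n² − 1)/6. -/
open Finset

/-- Closed form (subtraction-free): 6·∑_{b≤m} ∑_{a<b} (b-a-1) + (m+1)m = (m+1)m². -/
lemma stmt6_sum_helper : ∀ m : ℕ,
    6 * (∑ b ∈ Finset.range (m+1), ∑ a ∈ Finset.range b, (b - a - 1)) + (m+1)*m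
      = (m+1)*m*m := by
  intro m
  induction m with
  | zero => simp
  | succ m ih =>
      rw [Finset.sum_range_succ]
      have hI : (∑ a ∈ Finset.range (m+1), ((m+1) - a - 1)) * 2 = (m+1) * m := by
        have h1 : ∑ a ∈ Finset.range (m+1), ((m+1) - a - 1)
            = ∑ a ∈ Finset.range (m+1), a := by
          have h0 := Finset.sum_range_reflect (fun x => x) (m+1)
          simp only [show ∀ a : ℕ, m + 1 - a - 1 = m + 1 - 1 - a from fun a => by omega]
          exact h0
        rw [h1, Finset.sum_range_id_mul_two, Nat.add_sub_cancel]
      zify at ih hI ⊢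
      linear_combination ih + 3 * hI

/-- From hammingDist ≥ card, all coordinates differ. -/
lemma stmt6_all_ne {n t : ℕ} (x y : Fin t → Fin n) (h : t ≤ hammingDist x y) :
    ∀ j, x j ≠ y j := by
  intro j he
  have hsub : (Finset.univ.filter fun i => x i ≠ y i) ⊆ Finset.univ.erase j := by
    intro i hi
    simp only [Finset.mem_filter, Finset.mem_univ, true_and] at hi
    refine Finset.mem_erase.2 ⟨?_, Finset.mem_univ i⟩
    rintro rfl; exact hi he
  have hc := Finset.card_le_card hsub
  rw [Finset.card_erase_of_mem (Finset.mem_univ j), Finset.card_univ, Fintype.card_fin] at hc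
  have hd : hammingDist x y = (Finset.univ.filter fun i => x i ≠ y i).card := rfl
  have hj : 0 < t := j.pos
  omega

/-- Corollary (upperbound): if 6t ≥ 6 + n(n² − 1), then K_n^t is not radio graceful. -/
theorem stmt_6 (n t : ℕ) (hn : 2 ≤ n) (ht : 1 ≤ t)
    (hbound : 6 * t ≥ 6 + n * (n ^ 2 - 1)) (N : ℕ) (hN : N = n ^ t) :
    ¬ ∃ v : Fin N → Fin t → Fin n, Function.Bijective v ∧
      ∀ i k : ℕ, 1 ≤ k → k < t → (h : i + k < N) →
        hammingDist (v ⟨i, by omega⟩) (v ⟨i + k, h⟩) ≥ t + 1 - k := by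
  rintro ⟨v, hbij, hv⟩
  by_cases hspec : n = 2 ∧ t = 2
  · -- special case n = 2, t = 2
    obtain ⟨rfl, rfl⟩ := hspec
    subst hN
    have h01 := hv 0 1 (le_refl 1) (by omega) (by norm_num)
    have h12 := hv 1 1 (le_refl 1) (by omega) (by norm_num)
    have e1 : (⟨0 + 1, by norm_num⟩ : Fin (2^2)) = ⟨1, by norm_num⟩ := by
      simp
    have e2 : (⟨1 + 1, by norm_num⟩ : Fin (2^2)) = ⟨2, by norm_num⟩ := by
      simp
    rw [e1] at h01
    rw [e2] at h12
    have hA := stmt6_all_ne _ _ (by omega : 2 ≤ hammingDist (v ⟨0, by norm_num⟩) (v ⟨1, by norm_num⟩)) 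
    have hB := stmt6_all_ne _ _ (by omega : 2 ≤ hammingDist (v ⟨1, by norm_num⟩) (v ⟨2, by norm_num⟩))
    have heq : v (⟨0, by norm_num⟩ : Fin (2^2)) = v ⟨2, by norm_num⟩ := by
      funext j
      have h1 := hA j
      have h2 := hB j
      have l0 := (v (⟨0, by norm_num⟩ : Fin (2^2)) j).isLt
      have l1 := (v (⟨1, by norm_num⟩ : Fin (2^2)) j).isLt
      have l2 := (v (⟨2, by norm_num⟩ : Fin (2^2)) j).isLt
      rw [← Fin.val_eq_val]
      rw [← Fin.val_ne_iff] at h1 h2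
      omega
    have := hbij.1 heq
    simp [Fin.mk.injEq] at this
  -- main case: t > n
  have htn : n < t := by
    rcases Nat.lt_or_ge n 3 with h3 | h3
    · have hn2 : n = 2 := by omega
      subst hn2
      norm_num at hbound
      have : t ≠ 2 := fun h => hspec ⟨rfl, h⟩
      omega
    · have h9 : 3 * 3 ≤ n * n := Nat.mul_le_mul h3 h3
      have hsq : n ^ 2 = n * n := sq n
      have h8 : 8 ≤ n ^ 2 - 1 := by omega
      have := Nat.mul_le_mul_left n h8
      omega
  have hNn : n < N := by
    have h2 : n ^ 2 ≤ n ^ t := Nat.pow_le_pow_right (by omega) (by omega)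
    have hsq : n ^ 2 = n * n := sq n
    have : 2 * n ≤ n * n := Nat.mul_le_mul_right n hn
    omega
  set w : Fin (n+1) → Fin t → Fin n := fun i => v ⟨i, by have := i.isLt; omega⟩ with hw
  -- key: a pair at gap k agrees in at most k-1 coordinates
  have key : ∀ a b : Fin (n+1), a < b →
      (Finset.univ.filter fun j => w a j = w b j).card + 1 ≤ b.val - a.val := by
    intro a b hab
    have hab' : a.val < b.val := hab
    have hbn : b.val < n + 1 := b.isLt
    obtain ⟨k, hk1, hk2⟩ : ∃ k, 1 ≤ k ∧ b.val = a.val + k :=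
      ⟨b.val - a.val, by omega, by omega⟩
    have hkt : k < t := by omega
    have hik : a.val + k < N := by omega
    have hd := hv a.val k (by omega) hkt hik
    have hd' : hammingDist (w a) (w b) ≥ t + 1 - k := by
      have e : (⟨a.val + k, hik⟩ : Fin N) = ⟨b.val, by omega⟩ := by
        simp only [Fin.mk.injEq]; omega
      rw [e] at hd
      exact hd
    have hsplit := Finset.card_filter_add_card_filter_not
      (s := (Finset.univ : Finset (Fin t))) (p := fun j => w a j = w b j)
    rw [Finset.card_univ, Fintype.card_fin] at hsplit
    have hdist : hammingDist (w a) (w b)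
        = (Finset.univ.filter fun j => ¬ (w a j = w b j)).card := rfl
    rw [hdist] at hd'
    omega
  -- pigeonhole: each coordinate has an agreeing pair
  have exPair : ∀ j : Fin t, ∃ p : Fin (n+1) × Fin (n+1), p.1 < p.2 ∧ w p.1 j = w p.2 j := by
    intro j
    have hcard : Fintype.card (Fin n) < Fintype.card (Fin (n+1)) := by simp
    obtain ⟨a, b, hab, he⟩ :=
      Fintype.exists_ne_map_eq_of_card_lt (fun i : Fin (n+1) => w i j) hcard
    rcases lt_or_gt_of_ne hab with h | h
    · exact ⟨(a, b), h, he⟩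
    · exact ⟨(b, a), h, he.symm⟩
  -- double counting
  set g : Fin t → Fin (n+1) × Fin (n+1) → ℕ :=
    fun j p => if p.1 < p.2 ∧ w p.1 j = w p.2 j then 1 else 0 with hg
  set Total : ℕ := ∑ j : Fin t, ∑ p : Fin (n+1) × Fin (n+1), g j p with hTotal
  have lower : t ≤ Total := by
    rw [hTotal]
    calc t = ∑ _j : Fin t, 1 := by simp
    _ ≤ ∑ j : Fin t, ∑ p : Fin (n+1) × Fin (n+1), g j p := by
        apply Finset.sum_le_sum
        intro j _
        obtain ⟨p, h1, h2⟩ := exPair j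
        calc 1 = g j p := by simp [hg, h1, h2]
        _ ≤ ∑ p : Fin (n+1) × Fin (n+1), g j p :=
            Finset.single_le_sum (fun _ _ => Nat.zero_le _) (Finset.mem_univ p)
  have upper : Total ≤ ∑ p : Fin (n+1) × Fin (n+1),
      (if p.1 < p.2 then p.2.val - p.1.val - 1 else 0) := by
    rw [hTotal, Finset.sum_comm]
    apply Finset.sum_le_sum
    intro p _
    by_cases hlt : p.1 < p.2
    · have : ∀ j : Fin t, g j p = if w p.1 j = w p.2 j then 1 else 0 := by
        intro j; simp [hg, hlt]
      rw [Finset.sum_congr rfl (fun j _ => this j)]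
      rw [← Finset.card_filter]
      have := key p.1 p.2 hlt
      have hab' : p.1.val < p.2.val := hlt
      simp only [if_pos hlt]
      omega
    · simp [hg, hlt]
  -- evaluate the upper bound sum
  have hB : ∑ p : Fin (n+1) × Fin (n+1), (if p.1 < p.2 then p.2.val - p.1.val - 1 else 0)
      = ∑ b ∈ Finset.range (n+1), ∑ a ∈ Finset.range b, (b - a - 1) := by
    rw [Fintype.sum_prod_type]
    rw [Finset.sum_comm]
    simp only [Fin.lt_def]
    have hx : ∀ b : Fin (n+1), ∑ a : Fin (n+1), (if a.val < b.val then b.val - a.val - 1 else 0)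
        = ∑ a ∈ Finset.range (n+1), (if a < b.val then b.val - a - 1 else 0) := fun b =>
      Fin.sum_univ_eq_sum_range (fun a => if a < b.val then b.val - a - 1 else 0) (n+1)
    rw [Finset.sum_congr rfl (fun b _ => hx b)]
    rw [Fin.sum_univ_eq_sum_range
      (fun b => ∑ a ∈ Finset.range (n+1), (if a < b then b - a - 1 else 0))]
    apply Finset.sum_congr rfl
    intro b hb
    have hb' : b < n + 1 := Finset.mem_range.1 hb
    rw [← Finset.sum_filter]
    apply Finset.sum_congr
    · ext x
      simp only [Finset.mem_filter, Finset.mem_range]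
      omega
    · intro x _; rfl
  -- put everything together
  have hS := stmt6_sum_helper n
  have hid : n * (n ^ 2 - 1) + (n + 1) * n = (n + 1) * n * n := by
    obtain ⟨k, rfl⟩ : ∃ k, n = k + 1 := ⟨n - 1, by omega⟩
    have h1 : (k + 1) ^ 2 = k * k + 2 * k + 1 := by ring
    have h2 : (k + 1) ^ 2 - 1 = k * k + 2 * k := by omega
    rw [h2]; ring
  rw [hB] at upper
  omega
end

section
/- Let n ≥ 3 and N ≥ 3. Call a finite set Δ of permutations of Fin n an instruction set if |Δ| = n − 1, every σ ∈ Δ satisfies σ⁻¹ 0 ≠ 0, and the map σ ↦ σ⁻¹ 0 is injective on Δ (so for every k ≠ 0 there is exactly one σ ∈ Δ with σ k = 0). Let Δgen be an instruction set generator: a function assigning to each index i with 1 ≤ i < N and each list of i permutations of Fin n an instruction set. Let B be the set of sequences σ : Fin N → Equiv.Perm (Fin n) such that σ 0 = 1 (the identity), σ 1 is the unique element of Δgen 1 [σ 0] sending 1 to 0, and for each 2 ≤ i < N, σ i ∈ Δgen i [σ 0, …, σ (i−1)]. Let A be the set of sequences u : Fin N → Fin n with u 0 = 0, u 1 = 1,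 and u j ≠ u (j+1) for all j with j + 1 < N. Then the map φ : B → A defined by φ(σ) = u where u j = ((σ j) ∘ (σ (j−1)) ∘ ⋯ ∘ (σ 1))⁻¹ 0 (and u 0 = 0) is a well-defined bijection from B onto A. -/
/-!
Write `P j = σ j * ⋯ * σ 1` (`partialProd`) and `u j = (P j)⁻¹ 0` (`track`). Then
`u (j + 1) = (P j)⁻¹ ((σ (j + 1))⁻¹ 0)`, so `u (j + 1) ≠ u j` exactly when
`(σ (j + 1))⁻¹ 0 ≠ 0`, and conversely `(σ (j + 1))⁻¹ 0 = P j (u (j + 1))` recovers the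
instruction from the column and the earlier instructions. An instruction set is mapped by
`σ ↦ σ⁻¹ 0` bijectively onto the nonzero points, so at every step the choice of `σ (j + 1)` in
the instruction set prescribed by `σ 0, …, σ j` corresponds exactly to the choice of a value
`u (j + 1) ≠ u j`; induction on `j` gives injectivity and surjectivity.
-/

open Equiv

theorem Equiv.Perm.bijOn_inv_apply_compl_singleton {α : Type*} [Fintype α] [DecidableEq α]
    {Δ : Finset (Perm α)} {z : α} (hcard : Δ.card = Fintype.card α - 1)
    (hne : ∀ σ ∈ Δ, σ⁻¹ z ≠ z) (hinj : Set.InjOn (fun σ : Perm α => σ⁻¹ z) Δ) :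
    Set.BijOn (fun σ : Perm α => σ⁻¹ z) Δ {z}ᶜ := by
  have hmaps : Set.MapsTo (fun σ : Perm α => σ⁻¹ z) Δ ({z}ᶜ : Finset α) := by
    intro σ hσ
    simpa using hne σ hσ
  have hsurj := Finset.surjOn_of_injOn_of_card_le _ hmaps hinj
    (by rw [Finset.card_compl, Finset.card_singleton, hcard])
  rw [Finset.coe_compl, Finset.coe_singleton] at hmaps hsurj
  exact ⟨hmaps, hinj, hsurj⟩

theorem exists_nat_extension {β : Type*} [Nonempty β] {N : ℕ} (f : Fin N → β) :
    ∃ g : ℕ → β, (fun i : Fin N => g i) = f := by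
  classical
  exact ⟨fun i => if h : i < N then f ⟨i, h⟩ else Classical.arbitrary β, by simp⟩

namespace Instructions

-- Sequences are indexed by `ℕ` to avoid bounds in indices; only their values below `N` matter.
variable {α : Type*}

def partialProd (σ : ℕ → Perm α) : ℕ → Perm α
  | 0 => 1
  | j + 1 => σ (j + 1) * partialProd σ j

def track (σ : ℕ → Perm α) (z : α) (j : ℕ) : α := (partialProd σ j)⁻¹ z

def history (σ : ℕ → Perm α) (i : ℕ) : List (Perm α) := List.ofFn fun a : Fin i => σ a

def IsInstructionSeq (Δgen : ℕ → List (Perm α) → Finset (Perm α)) (N : ℕ) (σ : ℕ → Perm α) :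
    Prop :=
  σ 0 = 1 ∧ ∀ i, 1 ≤ i → i < N → σ i ∈ Δgen i (history σ i)

def IsColumn (N : ℕ) (z : α) (u : ℕ → α) : Prop :=
  u 0 = z ∧ ∀ j, j + 1 < N → u j ≠ u (j + 1)

theorem ofFn_prod_eq_partialProd (σ : ℕ → Perm α) (j : ℕ) :
    (List.ofFn fun a : Fin j => σ (j - a)).prod = partialProd σ j := by
  induction j with
  | zero => rfl
  | succ j ih =>
    rw [List.ofFn_succ, List.prod_cons, partialProd, ← ih]
    simp

theorem partialProd_congr {σ τ : ℕ → Perm α} {j : ℕ} (h : ∀ i, 1 ≤ i → i ≤ j → σ i = τ i) :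
    partialProd σ j = partialProd τ j := by
  induction j with
  | zero => rfl
  | succ j ih =>
    rw [partialProd, partialProd, h (j + 1) (by omega) le_rfl,
      ih fun i h1 h2 => h i h1 (by omega)]

theorem history_congr {σ τ : ℕ → Perm α} {i : ℕ} (h : ∀ m < i, σ m = τ m) :
    history σ i = history τ i :=
  congrArg List.ofFn (funext fun a => h a a.isLt)

@[simp] theorem length_history (σ : ℕ → Perm α) (i : ℕ) : (history σ i).length = i :=
  List.length_ofFn

@[simp] theorem track_zero (σ : ℕ → Perm α) (z : α) : track σ z 0 = z := rfl

theorem track_one (σ : ℕ → Perm α) (z : α) : track σ z 1 = (σ 1)⁻¹ z := by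
  simp [track, partialProd]

theorem track_succ (σ : ℕ → Perm α) (z : α) (j : ℕ) :
    track σ z (j + 1) = (partialProd σ j)⁻¹ ((σ (j + 1))⁻¹ z) := by
  simp [track, partialProd, mul_inv_rev]

theorem inv_apply_eq_partialProd_track (σ : ℕ → Perm α) (z : α) (j : ℕ) :
    (σ (j + 1))⁻¹ z = partialProd σ j (track σ z (j + 1)) := by
  simp [track_succ]

theorem track_succ_ne {σ : ℕ → Perm α} {z : α} {j : ℕ} (h : (σ (j + 1))⁻¹ z ≠ z) :
    track σ z j ≠ track σ z (j + 1) := by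
  rw [track_succ, track]
  exact fun heq => h ((partialProd σ j)⁻¹.injective heq).symm

variable {Δgen : ℕ → List (Perm α) → Finset (Perm α)} {N : ℕ} {z : α}

theorem IsInstructionSeq.isColumn_track {σ : ℕ → Perm α}
    (hΔ : ∀ i l, 1 ≤ i → i < N → l.length = i →
      Set.MapsTo (fun τ : Perm α => τ⁻¹ z) (Δgen i l) {z}ᶜ)
    (hσ : IsInstructionSeq Δgen N σ) : IsColumn N z (track σ z) :=
  ⟨rfl, fun j hj => track_succ_ne (hΔ _ _ (by omega) hj (length_history σ _)
    (hσ.2 (j + 1) (by omega) hj))⟩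

theorem IsInstructionSeq.eq_of_track_eq {σ τ : ℕ → Perm α}
    (hΔ : ∀ i l, 1 ≤ i → i < N → l.length = i →
      Set.InjOn (fun τ : Perm α => τ⁻¹ z) (Δgen i l))
    (hσ : IsInstructionSeq Δgen N σ) (hτ : IsInstructionSeq Δgen N τ)
    (h : ∀ j < N, track σ z j = track τ z j) : ∀ i < N, σ i = τ i := by
  intro i
  induction i using Nat.strong_induction_on with
  | _ i ih =>
    intro hi
    rcases i with _ | k
    · exact hσ.1.trans hτ.1.symm
    have hhist : history σ (k + 1) = history τ (k + 1) :=
      history_congr fun m hm => ih m hm (by omega)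
    have hprod : partialProd σ k = partialProd τ k :=
      partialProd_congr fun m _ hm => ih m (by omega) (by omega)
    refine hΔ _ _ (by omega) hi (length_history σ _) (hσ.2 _ (by omega) hi)
      (hhist ▸ hτ.2 _ (by omega) hi) ?_
    simp only [inv_apply_eq_partialProd_track, hprod, h (k + 1) hi]

theorem exists_isInstructionSeq_track_eq_of_lt
    (hΔ : ∀ i l, 1 ≤ i → i < N → l.length = i →
      Set.SurjOn (fun τ : Perm α => τ⁻¹ z) (Δgen i l) {z}ᶜ)
    {u : ℕ → α} (hu : IsColumn N z u) :
    ∀ k < N, ∃ σ, IsInstructionSeq Δgen (k + 1) σ ∧ ∀ j ≤ k, track σ z j = u j := by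
  intro k
  induction k with
  | zero => exact fun _ => ⟨1, ⟨rfl, by omega⟩, fun j hj => by simp [Nat.le_zero.1 hj, hu.1]⟩
  | succ k ih =>
    intro hk
    obtain ⟨σ, hσ, htrack⟩ := ih (by omega)
    have hx : partialProd σ k (u (k + 1)) ≠ z := by
      intro hx
      apply hu.2 k hk
      rw [← htrack k le_rfl, track, ← hx]
      exact Perm.inv_eq_iff_eq.2 rfl
    obtain ⟨τ, hτ, hτz : τ⁻¹ z = _⟩ :=
      hΔ (k + 1) (history σ (k + 1)) (by omega) hk (length_history σ _) hx
    set σ' := Function.update σ (k + 1) τ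
    have hnew : σ' (k + 1) = τ := Function.update_self _ _ _
    have hagree : ∀ m ≤ k, σ' m = σ m := fun m hm =>
      Function.update_of_ne (by omega) _ _
    have hhist : ∀ i ≤ k + 1, history σ' i = history σ i :=
      fun i hi => history_congr fun m hm => hagree m (by omega)
    have hprod : ∀ j ≤ k, partialProd σ' j = partialProd σ j :=
      fun j hj => partialProd_congr fun m _ hm => hagree m (by omega)
    refine ⟨σ', ⟨(hagree 0 (by omega)).trans hσ.1, fun i hi1 hi => ?_⟩, fun j hj => ?_⟩
    · rw [hhist i (by omega)]
      rcases Nat.lt_or_ge i (k + 1) with hlt | hge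
      · rw [hagree i (by omega)]
        exact hσ.2 i hi1 hlt
      · rw [show i = k + 1 by omega, hnew]
        exact hτ
    · rcases Nat.lt_or_ge j (k + 1) with hlt | hge
      · rw [track, hprod j (by omega), ← htrack j (by omega), track]
      · rw [show j = k + 1 by omega, track_succ, hnew, hτz, hprod k le_rfl]
        exact Perm.inv_eq_iff_eq.2 rfl

theorem isInstructionSeq_iff (hN : 1 < N) {σ : ℕ → Perm α} :
    IsInstructionSeq Δgen N σ ↔ σ 0 = 1 ∧ σ 1 ∈ Δgen 1 [σ 0] ∧
      ∀ i : Fin N, 2 ≤ i.val → σ i ∈ Δgen i (List.ofFn fun a : Fin i => σ a) := by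
  refine and_congr_right fun _ =>
    ⟨fun h => ⟨h 1 le_rfl hN, fun i hi => h i (by omega) i.isLt⟩, fun h i h1 hi => ?_⟩
  rcases Nat.eq_or_lt_of_le h1 with rfl | h2
  · exact h.1
  · exact h.2 ⟨i, hi⟩ h2

theorem exists_isInstructionSeq_track_eq
    (hΔ : ∀ i l, 1 ≤ i → i < N → l.length = i →
      Set.SurjOn (fun τ : Perm α => τ⁻¹ z) (Δgen i l) {z}ᶜ)
    {u : ℕ → α} (hu : IsColumn N z u) :
    ∃ σ, IsInstructionSeq Δgen N σ ∧ ∀ j < N, track σ z j = u j := by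
  rcases N with _ | k
  · exact ⟨1, ⟨rfl, by omega⟩, by omega⟩
  · obtain ⟨σ, hσ, htrack⟩ := exists_isInstructionSeq_track_eq_of_lt hΔ hu k (by omega)
    exact ⟨σ, hσ, fun j hj => htrack j (by omega)⟩

end Instructions

open Instructions in
/-- Theorem (corr): for any instruction set generator, the map φ (tracking the preimage of 0
under the composite of the instructions applied so far) is a bijection from the set B of
instruction sequences onto the set A of columns of orderings. -/
theorem stmt_9 (n N : ℕ) (hn : 3 ≤ n) (hN : 3 ≤ N)
    (IsInstructionSet : Finset (Equiv.Perm (Fin n)) → Prop)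
    (hIS : ∀ Δ, IsInstructionSet Δ ↔
      Δ.card = n - 1 ∧ (∀ σ ∈ Δ, σ⁻¹ ⟨0, by omega⟩ ≠ ⟨0, by omega⟩) ∧
      Set.InjOn (fun σ : Equiv.Perm (Fin n) => σ⁻¹ ⟨0, by omega⟩) ↑Δ)
    (Δgen : ℕ → List (Equiv.Perm (Fin n)) → Finset (Equiv.Perm (Fin n)))
    (hΔgen : ∀ i l, 1 ≤ i → i < N → l.length = i → IsInstructionSet (Δgen i l))
    (B : Set (Fin N → Equiv.Perm (Fin n)))
    (hB : B = {σ | σ ⟨0, by omega⟩ = 1 ∧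
      (σ ⟨1, by omega⟩ ∈ Δgen 1 [σ ⟨0, by omega⟩] ∧
        σ ⟨1, by omega⟩ ⟨1, by omega⟩ = ⟨0, by omega⟩) ∧
      ∀ i : Fin N, 2 ≤ i.val →
        σ i ∈ Δgen i.val (List.ofFn fun a : Fin i.val =>
          σ ⟨a.val, lt_trans a.isLt i.isLt⟩)})
    (A : Set (Fin N → Fin n))
    (hA : A = {u | u ⟨0, by omega⟩ = ⟨0, by omega⟩ ∧ u ⟨1, by omega⟩ = ⟨1, by omega⟩ ∧
      ∀ j : ℕ, (h : j + 1 < N) → u ⟨j, by omega⟩ ≠ u ⟨j + 1, h⟩})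
    (φ : (Fin N → Equiv.Perm (Fin n)) → (Fin N → Fin n))
    (hφ : ∀ σ (j : Fin N), φ σ j =
      ((List.ofFn fun a : Fin j.val =>
          σ ⟨j.val - a.val, lt_of_le_of_lt (Nat.sub_le _ _) j.isLt⟩).prod)⁻¹ ⟨0, by omega⟩) :
    Set.BijOn φ B A := by
  set z : Fin n := ⟨0, by omega⟩
  have : Nonempty (Fin n) := ⟨z⟩
  have hΔ : ∀ i l, 1 ≤ i → i < N → l.length = i →
      Set.BijOn (fun σ : Equiv.Perm (Fin n) => σ⁻¹ z) (Δgen i l) {z}ᶜ := fun i l h1 h2 h3 => by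
    obtain ⟨hcard, hne, hinj⟩ := (hIS _).1 (hΔgen i l h1 h2 h3)
    exact Equiv.Perm.bijOn_inv_apply_compl_singleton (by rwa [Fintype.card_fin]) hne hinj
  have hφ' : ∀ σ : ℕ → Equiv.Perm (Fin n),
      φ (fun i : Fin N => σ i) = fun j : Fin N => track σ z j :=
    fun σ => funext fun j => by rw [hφ, track, ← ofFn_prod_eq_partialProd]
  have hB' : ∀ σ : ℕ → Equiv.Perm (Fin n), (fun i : Fin N => σ i) ∈ B ↔
      IsInstructionSeq Δgen N σ ∧ track σ z 1 = ⟨1, by omega⟩ := by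
    intro σ
    rw [hB, Set.mem_ofPred_eq, isInstructionSeq_iff (by omega), track_one, Perm.inv_eq_iff_eq]
    simp only [eq_comm (a := z)]
    tauto
  have hA' : ∀ u : ℕ → Fin n, (fun j : Fin N => u j) ∈ A ↔
      IsColumn N z u ∧ u 1 = ⟨1, by omega⟩ := by
    simp only [hA, Set.mem_ofPred_eq, IsColumn]
    tauto
  refine ⟨fun σ hσ => ?_, fun σ hσ τ hτ h => ?_, fun u hu => ?_⟩
  · obtain ⟨σ, rfl⟩ := exists_nat_extension σ
    rw [hB'] at hσ
    rw [hφ', hA']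
    exact ⟨hσ.1.isColumn_track fun i l h1 h2 h3 => (hΔ i l h1 h2 h3).mapsTo, hσ.2⟩
  · obtain ⟨σ, rfl⟩ := exists_nat_extension σ
    obtain ⟨τ, rfl⟩ := exists_nat_extension τ
    rw [hφ', hφ', funext_iff] at h
    rw [hB'] at hσ hτ
    funext i
    exact hσ.1.eq_of_track_eq (fun i l h1 h2 h3 => (hΔ i l h1 h2 h3).injOn) hτ.1
      (fun j hj => h ⟨j, hj⟩) i i.isLt
  · obtain ⟨u, rfl⟩ := exists_nat_extension u
    rw [hA'] at hu
    obtain ⟨σ, hσ, htrack⟩ := exists_isInstructionSeq_track_eq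
      (fun i l h1 h2 h3 => (hΔ i l h1 h2 h3).surjOn) hu.1
    refine ⟨fun i => σ i, (hB' σ).2 ⟨hσ, (htrack 1 (by omega)).trans hu.2⟩, ?_⟩
    rw [hφ']
    exact funext fun j => htrack j j.isLt
end

section
/- Let t ≥ 1, n : Fin t → ℕ with 2 ≤ n j for all j, and N = ∏ j, n j. Let σ : Fin N → Π j : Fin t, Equiv.Perm (Fin (n j)) be any matrix of permutations with σ 0 j = 1 (the identity) for all j. Define the generated weak ordering O : Fin N → (Π j : Fin t, Fin (n j)) by (O i) j = ((σ i j) ∘ (σ (i−1) j) ∘ ⋯ ∘ (σ 1 j))⁻¹ 0 (so (O 0) j = 0). Then O is bijective and satisfies hammingDist (O i) (O (i+k)) ≥ t + 1 − k for all i and all 1 ≤ k < t with i + k < N, if and only if O is injective and for every index i and every s with 1 ≤ s < t and s ≤ i < N, the cardinality of { j : Fin t | ((σ i j) ∘ (σ (i−1) j) ∘ ⋯ ∘ (σ (i−s+1) j)) 0 = 0 } is at most s − 1. -/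
/-- Theorem (LambdasGeneral): an order-generator σ generates an ordering inducing a
consecutive radio labeling of the Hamming graph iff the generated matrix O has no repetition
and, for every row i and run length s < t, at most s − 1 columns carry a run of s
instructions ending at row i whose composite fixes 0. -/
theorem stmt_12 (t : ℕ) (ht : 1 ≤ t) (n : Fin t → ℕ) (hn : ∀ j, 2 ≤ n j)
    (N : ℕ) (hN : N = ∏ j, n j)
    (σ : Fin N → ∀ j : Fin t, Equiv.Perm (Fin (n j)))
    (hσ0 : ∀ i : Fin N, i.val = 0 → ∀ j, σ i j = 1)
    (O : Fin N → ∀ j : Fin t, Fin (n j))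
    (hO : ∀ (i : Fin N) (j : Fin t), O i j =
      ((List.ofFn fun a : Fin i.val =>
          σ ⟨i.val - a.val, lt_of_le_of_lt (Nat.sub_le _ _) i.isLt⟩ j).prod)⁻¹
        ⟨0, by have := hn j; omega⟩) :
    (Function.Bijective O ∧ ∀ i k : ℕ, 1 ≤ k → k < t → (h : i + k < N) →
        hammingDist (O ⟨i, by omega⟩) (O ⟨i + k, h⟩) ≥ t + 1 - k) ↔
    (Function.Injective O ∧ ∀ i s : ℕ, 1 ≤ s → s < t → s ≤ i → (h : i < N) →
        Nat.card {j : Fin t //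
          (List.ofFn fun a : Fin s => σ ⟨i - a.val, by omega⟩ j).prod
            ⟨0, by have := hn j; omega⟩ = ⟨0, by have := hn j; omega⟩} ≤ s - 1) := by
  have ht0 : ∀ j : Fin t, (0:ℕ) < n j := fun j => by have := hn j; omega
  -- key pointwise lemma
  have key : ∀ (i s : ℕ) (hs1 : 1 ≤ s) (hsi : s ≤ i) (h : i < N) (j : Fin t),
      (O ⟨i - s, by omega⟩ j = O ⟨i, h⟩ j) ↔
      ((List.ofFn fun a : Fin s => σ ⟨i - a.val, by omega⟩ j).prod
          ⟨0, ht0 j⟩ = ⟨0, ht0 j⟩) := by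
    intro i s hs1 hsi h j
    rw [hO, hO]
    have hsplit : (List.ofFn fun a : Fin ((⟨i, h⟩ : Fin N).val) =>
          σ ⟨(⟨i, h⟩ : Fin N).val - a.val,
            lt_of_le_of_lt (Nat.sub_le _ _) (⟨i, h⟩ : Fin N).isLt⟩ j)
        = (List.ofFn fun a : Fin s => σ ⟨i - a.val, by omega⟩ j)
          ++ (List.ofFn fun a : Fin (i - s) => σ ⟨i - s - a.val, by omega⟩ j) := by
      apply List.ext_getElem
      · simp; omega
      · intro m h1 h2
        simp only [List.getElem_ofFn, List.getElem_append, List.length_ofFn]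
        split
        · rfl
        · have : i - m = i - s - (m - s) := by omega
          simp [this]
    rw [hsplit, List.prod_append, mul_inv_rev]
    have hP : (List.ofFn fun a : Fin ((⟨i - s, by omega⟩ : Fin N).val) =>
          σ ⟨(⟨i - s, by omega⟩ : Fin N).val - a.val,
            lt_of_le_of_lt (Nat.sub_le _ _) (⟨i - s, by omega⟩ : Fin N).isLt⟩ j)
        = (List.ofFn fun a : Fin (i - s) => σ ⟨i - s - a.val, by omega⟩ j) := rfl
    rw [hP]
    simp only [Equiv.Perm.mul_apply, EmbeddingLike.apply_eq_iff_eq]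
    rw [eq_comm, Equiv.Perm.inv_eq_iff_eq, eq_comm]
  -- card/dist lemma
  have dist_iff : ∀ (i s : ℕ) (hs1 : 1 ≤ s) (hs2 : s < t) (hsi : s ≤ i) (h : i < N),
      (hammingDist (O ⟨i - s, by omega⟩) (O ⟨i, h⟩) ≥ t + 1 - s) ↔
      Nat.card {j : Fin t //
          (List.ofFn fun a : Fin s => σ ⟨i - a.val, by omega⟩ j).prod
            ⟨0, ht0 j⟩ = ⟨0, ht0 j⟩} ≤ s - 1 := by
    intro i s hs1 hs2 hsi h
    have hc : Nat.card {j : Fin t //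
          (List.ofFn fun a : Fin s => σ ⟨i - a.val, by omega⟩ j).prod
            ⟨0, ht0 j⟩ = ⟨0, ht0 j⟩}
        = (Finset.univ.filter fun j : Fin t =>
            O ⟨i - s, by omega⟩ j = O ⟨i, h⟩ j).card := by
      rw [Nat.card_eq_fintype_card, Fintype.card_subtype]
      apply Finset.card_bij (fun a _ => a) <;> simp [key i s hs1 hsi h]
    rw [hc]
    have hd : hammingDist (O ⟨i - s, by omega⟩) (O ⟨i, h⟩)
        = (Finset.univ.filter fun j : Fin t =>
            ¬ (O ⟨i - s, by omega⟩ j = O ⟨i, h⟩ j)).card := rfl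
    have hsum := Finset.card_filter_add_card_filter_not
      (s := (Finset.univ : Finset (Fin t)))
      (p := fun j : Fin t => O ⟨i - s, by omega⟩ j = O ⟨i, h⟩ j)
    simp only [Finset.card_univ, Fintype.card_fin] at hsum
    omega
  constructor
  · rintro ⟨hbij, hdist⟩
    refine ⟨hbij.injective, ?_⟩
    intro i s hs1 hs2 hsi h
    have hd := hdist (i - s) s hs1 hs2 (by omega)
    have e : (⟨i - s + s, by omega⟩ : Fin N) = ⟨i, h⟩ := Fin.mk_eq_mk.mpr (by omega)
    rw [e] at hd
    exact (dist_iff i s hs1 hs2 hsi h).mp hd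
  · rintro ⟨hinj, hcard⟩
    have hbij : Function.Bijective O := by
      rw [Fintype.bijective_iff_injective_and_card]
      refine ⟨hinj, ?_⟩
      simp [hN, Fintype.card_pi]
    refine ⟨hbij, ?_⟩
    intro i k hk1 hk2 h
    have hc := hcard (i + k) k hk1 hk2 (by omega) h
    have hd := (dist_iff (i + k) k hk1 hk2 (by omega) h).mpr hc
    have e : (⟨i + k - k, by omega⟩ : Fin N) = ⟨i, by omega⟩ := Fin.mk_eq_mk.mpr (by omega)
    rwa [e] at hd
end

section
/- There is no bijection v : Fin 243 → (Fin 5 → Fin 3) such that for all indices i and all k with 1 ≤ k ≤ 4 and i + k < 243, hammingDist (v i) (v (i+k)) ≥ 6 − k. That is, K_3^5 is not radio graceful. -/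
open Finset

private lemma eqset_card (x y : Fin 5 → Fin 3) :
    ({j | x j = y j} : Finset (Fin 5)).card = 5 - hammingDist x y := by
  have h := Finset.card_filter_add_card_filter_not
    (s := (univ : Finset (Fin 5))) (p := fun j => x j ≠ y j)
  simp only [not_not] at h
  have : hammingDist x y = ({j | x j ≠ y j} : Finset (Fin 5)).card := rfl
  simp only [Finset.card_univ, Fintype.card_fin] at h
  omega

private lemma full_ne {x y : Fin 5 → Fin 3} (h : 5 ≤ hammingDist x y) :
    ∀ j, x j ≠ y j := by
  have hc := eqset_card x y
  have h0 : ({j | x j = y j} : Finset (Fin 5)).card = 0 := by omega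
  intro j hj
  have : j ∈ ({j | x j = y j} : Finset (Fin 5)) := by simpa using hj
  simp [Finset.card_eq_zero.mp h0] at this

private lemma trichot : ∀ a b c d : Fin 3, a ≠ b → b ≠ c → c ≠ d →
    (c = a ∨ d = b ∨ d = a) := by decide

/-- K_3^5 is not radio graceful: no ordering of its 243 vertices induces a consecutive radio
labeling. -/
theorem stmt_15 : ¬ ∃ v : Fin 243 → Fin 5 → Fin 3, Function.Bijective v ∧
    ∀ i k : ℕ, 1 ≤ k → k ≤ 4 → (h : i + k < 243) →
      hammingDist (v ⟨i, by omega⟩) (v ⟨i + k, h⟩) ≥ 6 - k := by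
  rintro ⟨v, -, hc⟩
  set a := v ⟨0, by norm_num⟩ with ha
  set b := v ⟨1, by norm_num⟩ with hb
  set c := v ⟨2, by norm_num⟩ with hcc
  set d := v ⟨3, by norm_num⟩ with hd
  have h01 : 5 ≤ hammingDist a b := hc 0 1 (by norm_num) (by norm_num) (by norm_num)
  have h12 : 5 ≤ hammingDist b c := hc 1 1 (by norm_num) (by norm_num) (by norm_num)
  have h23 : 5 ≤ hammingDist c d := hc 2 1 (by norm_num) (by norm_num) (by norm_num)
  have h02 : 4 ≤ hammingDist a c := hc 0 2 (by norm_num) (by norm_num) (by norm_num)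
  have h13 : 4 ≤ hammingDist b d := hc 1 2 (by norm_num) (by norm_num) (by norm_num)
  have h03 : 3 ≤ hammingDist a d := hc 0 3 (by norm_num) (by norm_num) (by norm_num)
  have hab := full_ne h01
  have hbc := full_ne h12
  have hcd := full_ne h23
  set S1 : Finset (Fin 5) := {j | c j = a j} with hS1
  set S2 : Finset (Fin 5) := {j | d j = b j} with hS2
  set S3 : Finset (Fin 5) := {j | d j = a j} with hS3
  have hcov : (univ : Finset (Fin 5)) ⊆ S1 ∪ S2 ∪ S3 := by
    intro j _
    rcases trichot (a j) (b j) (c j) (d j) (hab j) (hbc j) (hcd j) with h | h | h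
    · exact Finset.mem_union_left _ (Finset.mem_union_left _ (by simp [hS1, h]))
    · exact Finset.mem_union_left _ (Finset.mem_union_right _ (by simp [hS2, h]))
    · exact Finset.mem_union_right _ (by simp [hS3, h])
  have hcard : 5 ≤ (S1 ∪ S2 ∪ S3).card := by
    calc 5 = (univ : Finset (Fin 5)).card := by simp
    _ ≤ _ := Finset.card_le_card hcov
  have hle : (S1 ∪ S2 ∪ S3).card ≤ S1.card + S2.card + S3.card :=
    le_trans (Finset.card_union_le _ _)
      (Nat.add_le_add_right (Finset.card_union_le _ _) _)
  have e1 : S1.card = 5 - hammingDist c a := eqset_card c a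
  have e2 : S2.card = 5 - hammingDist d b := eqset_card d b
  have e3 : S3.card = 5 - hammingDist d a := eqset_card d a
  rw [hammingDist_comm] at e1 e2 e3
  omega
end

section
/- Every bijection v : Fin 81 → (Fin 4 → Fin 3) satisfying hammingDist (v i) (v (i+k)) ≥ 5 − k for all indices i and all k with 1 ≤ k ≤ 3 and i + k < 81 must in fact satisfy, for every index i and every s with 1 ≤ s ≤ 3 and i + s < 81, hammingDist (v i) (v (i+s)) = 5 − s; that is, v i and v (i+s) share exactly s − 1 coordinates. -/
/-!
Four words over an alphabet of at most three letters agree, by pigeonhole, in some pair of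
letters at every coordinate, so their six pairwise Hamming distances add up to at most `5 n`
for words of length `n`. For four consecutive vertices of the ordering the radio conditions
give the lower bounds `4, 3, 2, 4, 3, 4`, whose sum is already `20 = 5 · 4`, so each of them
is attained.
-/

open Finset

variable {ι α : Type*} [DecidableEq α]

lemma card_pairs_ne_le_five [Fintype α] (hα : Fintype.card α < 4) (a b c d : α) :
    ((if a ≠ b then 1 else 0) + (if a ≠ c then 1 else 0) + (if a ≠ d then 1 else 0) +
      (if b ≠ c then 1 else 0) + (if b ≠ d then 1 else 0) + (if c ≠ d then 1 else 0) : ℕ)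
      ≤ 5 := by
  have not_all_ne : ¬ (a ≠ b ∧ a ≠ c ∧ a ≠ d ∧ b ≠ c ∧ b ≠ d ∧ c ≠ d) := by
    rintro ⟨hab, hac, had, hbc, hbd, hcd⟩
    have hinj : Function.Injective ![a, b, c, d] := by
      intro i j
      fin_cases i <;> fin_cases j <;> simp_all [eq_comm]
    simpa using (Fintype.card_le_of_injective _ hinj).trans_lt hα
  split_ifs <;> simp_all

lemma hammingDist_eq_sum_ite [Fintype ι] (x y : ι → α) :
    hammingDist x y = ∑ i, if x i ≠ y i then 1 else 0 := by
  rw [hammingDist, card_filter]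

lemma sum_pairwise_hammingDist_le [Fintype ι] [Fintype α] (hα : Fintype.card α < 4)
    (a b c d : ι → α) :
    hammingDist a b + hammingDist a c + hammingDist a d + hammingDist b c + hammingDist b d +
      hammingDist c d ≤ 5 * Fintype.card ι := by
  simp only [hammingDist_eq_sum_ite, ← sum_add_distrib]
  calc _ ≤ ∑ _i : ι, 5 :=
        sum_le_sum fun i _ => card_pairs_ne_le_five hα (a i) (b i) (c i) (d i)
    _ = 5 * Fintype.card ι := by simp [mul_comm]

lemma hammingDist_eq_of_radio_window [Fintype ι] [Fintype α] (hι : Fintype.card ι = 4)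
    (hα : Fintype.card α < 4) {a b c d : ι → α}
    (hab : 4 ≤ hammingDist a b) (hac : 3 ≤ hammingDist a c) (had : 2 ≤ hammingDist a d)
    (hbc : 4 ≤ hammingDist b c) (hbd : 3 ≤ hammingDist b d) (hcd : 4 ≤ hammingDist c d) :
    hammingDist a c = 3 ∧ hammingDist a d = 2 ∧ hammingDist b d = 3 := by
  have := sum_pairwise_hammingDist_le hα a b c d
  omega

/-- In any ordering of K_3^4 inducing a consecutive radio labeling, v i and v (i+s) share
exactly s − 1 coordinates, i.e. hammingDist (v i) (v (i+s)) = 5 − s for 1 ≤ s ≤ 3. -/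
theorem stmt_16 (v : Fin 81 → Fin 4 → Fin 3)
    (hrad : ∀ i k : ℕ, 1 ≤ k → k ≤ 3 → (h : i + k < 81) →
      hammingDist (v ⟨i, by omega⟩) (v ⟨i + k, h⟩) ≥ 5 - k) :
    ∀ i s : ℕ, 1 ≤ s → s ≤ 3 → (h : i + s < 81) →
      hammingDist (v ⟨i, by omega⟩) (v ⟨i + s, h⟩) = 5 - s := by
  have window (j : ℕ) (hj : j + 3 < 81) :=
    hammingDist_eq_of_radio_window (by simp) (by simp)
      (hrad j 1 le_rfl (by norm_num) (by omega))
      (hrad j 2 (by norm_num) (by norm_num) (by omega))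
      (hrad j 3 (by norm_num) le_rfl hj)
      (hrad (j + 1) 1 le_rfl (by norm_num) (by omega))
      (hrad (j + 1) 2 (by norm_num) (by norm_num) (by omega))
      (hrad (j + 2) 1 le_rfl (by norm_num) (by omega))
  intro i s hs1 hs3 h
  interval_cases s
  · exact le_antisymm (hammingDist_le_card_fintype.trans (by simp)) (hrad i 1 le_rfl hs3 h)
  · by_cases hi : i + 3 < 81
    · exact (window i hi).1
    · obtain rfl : i = 78 := by omega
      exact (window 77 (by norm_num)).2.2
  · exact (window i h).2.1
end
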